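/- (Lemma 5.8, item 2.) Assume the pair (A, b) is controllable (span{b, Ab, …, A^{n−1}b} = ℝⁿ) and A is invertible. Then for every α ∈ [0, T], the topological interior of R_α satisfies int R_α = {ξ ∈ R(T) : V₁(ξ) < α}, where V₁(ξ) = inf{‖u‖₁ : u ∈ U(ξ)}. -/

import Mathlib

open MeasureTheory

noncomputable section

/-- A control: a measurable function with `|u t| ≤ 1` a.e. on `[0, T]`. -/
def IsControl (T : ℝ) (u : ℝ → ℝ) : Prop :=
  Measurable u ∧ ∀ᵐ t ∂(volume.restrict (Set.Icc (0:ℝ) T)), |u t| ≤ 1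

/-- `∫₀ᵀ e^{−As} b u(s) ds`, the endpoint map of the system `dx/dt = Ax + bu`. -/
def steer (n : ℕ) (A : Matrix (Fin n) (Fin n) ℝ) (b : Fin n → ℝ) (T : ℝ) (u : ℝ → ℝ) :
    Fin n → ℝ :=
  ∫ s in Set.Icc (0:ℝ) T, u s • (NormedSpace.exp (-(s • A))).mulVec b

/-- `L¹` norm of a control on `[0, T]`. -/
def L1norm (T : ℝ) (u : ℝ → ℝ) : ℝ := ∫ t in Set.Icc (0:ℝ) T, |u t|

/-- The support of `u`: closure of `{t ∈ [0,T] : u t ≠ 0}`. -/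
def sparseSupp (T : ℝ) (u : ℝ → ℝ) : Set ℝ :=
  closure {t ∈ Set.Icc (0:ℝ) T | u t ≠ 0}

/-- `L⁰` "norm": Lebesgue measure of the support. -/
def L0norm (T : ℝ) (u : ℝ → ℝ) : ℝ := (volume (sparseSupp T u)).toReal

/-- Admissible controls for initial state `ξ`: controls steering `ξ` to `0` at time `T`. -/
def Adm (n : ℕ) (A : Matrix (Fin n) (Fin n) ℝ) (b : Fin n → ℝ) (T : ℝ) (ξ : Fin n → ℝ) :
    Set (ℝ → ℝ) :=
  {u | IsControl T u ∧ ξ = -(steer n A b T u)}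

/-- The reachable set `R(T)`. -/
def ReachSet (n : ℕ) (A : Matrix (Fin n) (Fin n) ℝ) (b : Fin n → ℝ) (T : ℝ) :
    Set (Fin n → ℝ) :=
  {x | ∃ u, IsControl T u ∧ x = steer n A b T u}

/-- The set `R_α`. -/
def Rset (n : ℕ) (A : Matrix (Fin n) (Fin n) ℝ) (b : Fin n → ℝ) (T α : ℝ) :
    Set (Fin n → ℝ) :=
  {x | ∃ u, IsControl T u ∧ L1norm T u ≤ α ∧ x = steer n A b T u}

/-- Value function of the `L¹`-optimal control problem. -/
def V1 (n : ℕ) (A : Matrix (Fin n) (Fin n) ℝ) (b : Fin n → ℝ) (T : ℝ) (ξ : Fin n → ℝ) : ℝ :=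
  sInf (L1norm T '' Adm n A b T ξ)

/-- Value function of the sparse (`L⁰`) optimal control problem. -/
def V0 (n : ℕ) (A : Matrix (Fin n) (Fin n) ℝ) (b : Fin n → ℝ) (T : ℝ) (ξ : Fin n → ℝ) : ℝ :=
  sInf (L0norm T '' Adm n A b T ξ)

/-- Controllability of the pair `(A, b)`: `span {b, Ab, …, A^{n−1} b} = ℝⁿ`. -/
def Controllable (n : ℕ) (A : Matrix (Fin n) (Fin n) ℝ) (b : Fin n → ℝ) : Prop :=
  Submodule.span ℝ (Set.range fun i : Fin n => (A ^ (i : ℕ)).mulVec b) = ⊤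

/-
If `ξ` is interior to `R_α` with `α > 0`, then `t • ξ ∈ R_α` for some `t > 1`, and rescaling the
control by `t⁻¹` gives `V₁ ξ ≤ α / t < α`; for `α = 0`, `R_0 = {0}` has empty interior.
Conversely, let `w` steer to `ξ` with `‖w‖₁ = β < α ≤ T`. For `c₀ ∈ (β / T, 1)` the set `E` where
`|w| ≤ c₀` has positive measure. For `c ≠ 0` the function `s ↦ c ⬝ᵥ e^{-sA} b` is analytic and, by
controllability, not identically zero, so it vanishes only on a null set and the Gramian `G` of
`s ↦ e^{-sA} b` on `E` is invertible. For small `c` the control `u = w + 𝟙_E (c ⬝ᵥ e^{-sA} b)`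
still satisfies `|u| ≤ 1` and `‖u‖₁ ≤ α`, and it steers to `ξ + G c`; these endpoints fill a
neighbourhood of `ξ`.
-/

open Set Filter Topology Matrix NormedSpace

variable {n : ℕ}

theorem ae_ne_zero_of_analyticOnNhd {μ : Measure ℝ} [NullSingletonClass μ] {g : ℝ → ℝ}
    (hg : AnalyticOnNhd ℝ g univ) {x₀ : ℝ} (hx₀ : g x₀ ≠ 0) : ∀ᵐ x ∂μ, g x ≠ 0 := by
  rcases hg.eqOn_zero_or_eventually_ne_zero_of_preconnected isPreconnected_univ with h | h
  · exact absurd (h (mem_univ x₀)) hx₀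
  · have := ae_restrict_le_codiscreteWithin (μ := μ) MeasurableSet.univ h
    rwa [Measure.restrict_univ] at this

theorem eventually_forall_abs_dotProduct_lt {X : Type*} [TopologicalSpace X] {K : Set X}
    (hK : IsCompact K) {f : X → Fin n → ℝ} (hf : Continuous f) {δ : ℝ} (hδ : 0 < δ) :
    ∀ᶠ c in 𝓝 (0 : Fin n → ℝ), ∀ s ∈ K, |c ⬝ᵥ f s| < δ :=
  hK.eventually_forall_of_forall_eventually fun s _ =>
    ((continuous_fst.dotProduct (hf.comp continuous_snd)).abs.tendsto ((0 : Fin n → ℝ), s))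
      |>.eventually_lt_const (by simpa using hδ)

section Gramian

variable {α : Type*} [MeasurableSpace α] (μ : Measure α) (f : α → Fin n → ℝ)

def gramian (hf : ∀ c, Integrable (fun s => (c ⬝ᵥ f s) • f s) μ) :
    (Fin n → ℝ) →ₗ[ℝ] (Fin n → ℝ) where
  toFun c := ∫ s, (c ⬝ᵥ f s) • f s ∂μ
  map_add' c d := by
    simp only [add_dotProduct, add_smul]
    exact integral_add (hf c) (hf d)
  map_smul' a c := by
    simp only [smul_dotProduct, smul_eq_mul, ← smul_smul, RingHom.id_apply]
    exact integral_smul a _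

variable {μ f}

theorem gramian_apply (hf : ∀ c, Integrable (fun s => (c ⬝ᵥ f s) • f s) μ) (c : Fin n → ℝ) :
    gramian μ f hf c = ∫ s, (c ⬝ᵥ f s) • f s ∂μ := rfl

theorem dotProduct_gramian (hf : ∀ c, Integrable (fun s => (c ⬝ᵥ f s) • f s) μ)
    (c : Fin n → ℝ) : c ⬝ᵥ gramian μ f hf c = ∫ s, (c ⬝ᵥ f s) ^ 2 ∂μ := by
  have h := (dotProductBilin ℝ ℝ c).toContinuousLinearMap.integral_comp_comm (hf c)
  simpa [gramian_apply, dotProduct_smul, sq] using h.symm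

theorem gramian_injective (hf : ∀ c, Integrable (fun s => (c ⬝ᵥ f s) • f s) μ)
    (hnd : ∀ c ≠ 0, ¬ ∀ᵐ s ∂μ, c ⬝ᵥ f s = 0) : Function.Injective (gramian μ f hf) := by
  refine (injective_iff_map_eq_zero _).2 fun c hc => ?_
  by_contra hc0
  have hsq : Integrable (fun s => (c ⬝ᵥ f s) ^ 2) μ := by
    simpa [dotProduct_smul, sq] using
      (dotProductBilin ℝ ℝ c).toContinuousLinearMap.integrable_comp (hf c)
  have hint : ∫ s, (c ⬝ᵥ f s) ^ 2 ∂μ = 0 := by rw [← dotProduct_gramian hf, hc, dotProduct_zero]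
  refine hnd c hc0 ?_
  filter_upwards [(integral_eq_zero_iff_of_nonneg (fun s => sq_nonneg _) hsq).1 hint] with s hs
  exact pow_eq_zero_iff (n := 2) (by norm_num) |>.1 hs

end Gramian

-- Any Banach-algebra norm on matrices would do; it is needed only to expand and differentiate
-- `exp`.
attribute [local instance] Matrix.linftyOpNormedRing Matrix.linftyOpNormedAlgebra

def steerKernel (A : Matrix (Fin n) (Fin n) ℝ) (b : Fin n → ℝ) (s : ℝ) : Fin n → ℝ :=
  exp (-(s • A)) *ᵥ b

def dotProductMulVecCLM (c v : Fin n → ℝ) : Matrix (Fin n) (Fin n) ℝ →L[ℝ] ℝ :=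
  LinearMap.toContinuousLinearMap
    { toFun := fun M => c ⬝ᵥ M *ᵥ v
      map_add' := fun M N => by simp [add_mulVec, dotProduct_add]
      map_smul' := fun a M => by simp [smul_mulVec, dotProduct_smul] }

variable (A : Matrix (Fin n) (Fin n) ℝ) (b : Fin n → ℝ)

theorem steerKernel_eq_dotProductMulVecCLM (c : Fin n → ℝ) :
    (fun s => c ⬝ᵥ steerKernel A b s) = fun s => dotProductMulVecCLM c b (exp (s • -A)) := by
  simp [steerKernel, dotProductMulVecCLM, smul_neg]

theorem continuous_steerKernel : Continuous (steerKernel A b) := by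
  unfold steerKernel
  fun_prop

theorem analyticOnNhd_dotProduct_steerKernel (c : Fin n → ℝ) :
    AnalyticOnNhd ℝ (fun s => c ⬝ᵥ steerKernel A b s) univ := by
  rw [steerKernel_eq_dotProductMulVecCLM]
  intro z _
  exact (dotProductMulVecCLM c b).analyticAt _ |>.comp
    ((exp_analytic _).comp (((ContinuousLinearMap.id ℝ ℝ).smulRight (-A)).analyticAt z))

theorem dotProduct_pow_mulVec_eq_zero {c : Fin n → ℝ}
    (h : ∀ s, c ⬝ᵥ steerKernel A b s = 0) (k : ℕ) : c ⬝ᵥ (A ^ k) *ᵥ b = 0 := by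
  set L := dotProductMulVecCLM c b
  suffices ∀ k (s : ℝ), L (exp (s • -A) * A ^ k) = 0 by
    simpa [L, dotProductMulVecCLM] using this k 0
  intro k
  induction k with
  | zero => simpa [L, dotProductMulVecCLM, steerKernel, smul_neg] using h
  | succ k ih =>
    intro s
    have hderiv := L.hasFDerivAt.comp_hasDerivAt s
      ((hasDerivAt_exp_smul_const (-A) s).mul_const (A ^ k))
    have h0 := hderiv.unique ((hasDerivAt_const s (0 : ℝ)).congr_of_eventuallyEq
      (Eventually.of_forall ih))
    rw [mul_neg, neg_mul, mul_assoc, ← pow_succ'] at h0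
    exact neg_eq_zero.1 ((L.map_neg _).symm.trans h0)

theorem Controllable.eq_zero_of_forall_dotProduct_pow_mulVec_eq_zero (hctrb : Controllable n A b)
    {c : Fin n → ℝ} (h : ∀ k : ℕ, c ⬝ᵥ (A ^ k) *ᵥ b = 0) : c = 0 := by
  have hspan : Submodule.span ℝ (range fun i : Fin n => (A ^ (i : ℕ)) *ᵥ b) ≤
      LinearMap.ker (dotProductBilin ℝ ℝ c) :=
    Submodule.span_le.2 (range_subset_iff.2 fun i => h i)
  rw [hctrb] at hspan
  exact dotProduct_self_eq_zero.1 (hspan Submodule.mem_top)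

theorem Controllable.ae_dotProduct_steerKernel_ne_zero (hctrb : Controllable n A b)
    {μ : Measure ℝ} [NullSingletonClass μ] {c : Fin n → ℝ} (hc : c ≠ 0) :
    ∀ᵐ s ∂μ, c ⬝ᵥ steerKernel A b s ≠ 0 := by
  obtain ⟨s₀, hs₀⟩ : ∃ s₀, c ⬝ᵥ steerKernel A b s₀ ≠ 0 := by
    by_contra! h
    exact hc (hctrb.eq_zero_of_forall_dotProduct_pow_mulVec_eq_zero A b
      (dotProduct_pow_mulVec_eq_zero A b h))
  exact ae_ne_zero_of_analyticOnNhd (analyticOnNhd_dotProduct_steerKernel A b c) hs₀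

section Controls

variable {T : ℝ} {u : ℝ → ℝ}

theorem steer_eq (u : ℝ → ℝ) :
    steer n A b T u = ∫ s in Icc 0 T, u s • steerKernel A b s := rfl

theorem IsControl.integrableOn (hu : IsControl T u) : IntegrableOn u (Icc 0 T) :=
  Integrable.of_bound hu.1.aestronglyMeasurable 1 (by simpa using hu.2)

theorem IsControl.integrableOn_smul_steerKernel (hu : IsControl T u) :
    IntegrableOn (fun s => u s • steerKernel A b s) (Icc 0 T) :=
  hu.integrableOn.smul_continuousOn (continuous_steerKernel A b).continuousOn isCompact_Icc

theorem L1norm_nonneg (u : ℝ → ℝ) : 0 ≤ L1norm T u :=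
  integral_nonneg fun _ => abs_nonneg _

theorem IsControl.smul (hu : IsControl T u) {c : ℝ} (hc : |c| ≤ 1) : IsControl T (c • u) := by
  refine ⟨hu.1.const_smul c, ?_⟩
  filter_upwards [hu.2] with t ht
  simpa [abs_mul] using mul_le_one₀ hc (abs_nonneg _) ht

theorem steer_smul (c : ℝ) (u : ℝ → ℝ) : steer n A b T (c • u) = c • steer n A b T u := by
  simp only [steer_eq, Pi.smul_apply, smul_assoc, integral_smul]

theorem L1norm_smul (c : ℝ) (u : ℝ → ℝ) : L1norm T (c • u) = |c| * L1norm T u := by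
  simp only [L1norm, Pi.smul_apply, smul_eq_mul, abs_mul, integral_const_mul]

theorem IsControl.neg (hu : IsControl T u) : IsControl T (-u) := by
  simpa using hu.smul (c := -1) (by simp)

theorem steer_neg (u : ℝ → ℝ) : steer n A b T (-u) = -steer n A b T u := by
  simpa using steer_smul A b (-1) u

theorem L1norm_neg (u : ℝ → ℝ) : L1norm T (-u) = L1norm T u := by
  simpa using L1norm_smul (T := T) (-1) u

theorem neg_mem_Adm_steer (hu : IsControl T u) : -u ∈ Adm n A b T (steer n A b T u) :=
  ⟨hu.neg, by rw [steer_neg, neg_neg]⟩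

theorem V1_steer_le (hu : IsControl T u) : V1 n A b T (steer n A b T u) ≤ L1norm T u := by
  refine csInf_le ⟨0, ?_⟩ ⟨-u, neg_mem_Adm_steer A b hu, L1norm_neg u⟩
  rintro _ ⟨v, -, rfl⟩
  exact L1norm_nonneg v

theorem V1_le_of_mem_Rset {α : ℝ} {x : Fin n → ℝ} (hx : x ∈ Rset n A b T α) :
    V1 n A b T x ≤ α := by
  obtain ⟨u, hu, hα, rfl⟩ := hx
  exact (V1_steer_le A b hu).trans hα

theorem exists_control_of_V1_lt {ξ : Fin n → ℝ} (hξ : ξ ∈ ReachSet n A b T) {α : ℝ}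
    (hV : V1 n A b T ξ < α) : ∃ u, IsControl T u ∧ steer n A b T u = ξ ∧ L1norm T u < α := by
  obtain ⟨u, hu, rfl⟩ := hξ
  obtain ⟨_, ⟨v, ⟨hv, hvξ⟩, rfl⟩, hvα⟩ :=
    exists_lt_of_csInf_lt ⟨_, mem_image_of_mem _ (neg_mem_Adm_steer A b hu)⟩ hV
  exact ⟨-v, hv.neg, by rw [steer_neg, hvξ], by rwa [L1norm_neg]⟩

theorem Rset_subset_ReachSet (α : ℝ) : Rset n A b T α ⊆ ReachSet n A b T :=
  fun _ ⟨u, hu, _, hx⟩ => ⟨u, hu, hx⟩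

theorem smul_mem_Rset {α c : ℝ} {x : Fin n → ℝ} (hx : x ∈ Rset n A b T α) (hc : |c| ≤ 1) :
    c • x ∈ Rset n A b T (|c| * α) := by
  obtain ⟨u, hu, hα, rfl⟩ := hx
  exact ⟨c • u, hu.smul hc, by rw [L1norm_smul]; gcongr, (steer_smul A b c u).symm⟩

theorem Rset_zero_subset : Rset n A b T 0 ⊆ {0} := by
  rintro _ ⟨u, hu, h0, rfl⟩
  have hae : ∀ᵐ t ∂volume.restrict (Icc 0 T), |u t| = 0 :=
    (integral_eq_zero_iff_of_nonneg (fun _ => abs_nonneg _) hu.integrableOn.abs).1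
      (h0.antisymm (L1norm_nonneg u))
  refine integral_eq_zero_of_ae ?_
  filter_upwards [hae] with t ht
  simp [abs_eq_zero.1 ht]

theorem interior_Rset_zero (hn : 0 < n) : interior (Rset n A b T 0) = ∅ := by
  have : Nonempty (Fin n) := ⟨⟨0, hn⟩⟩
  exact subset_empty_iff.1 ((interior_mono (Rset_zero_subset A b)).trans_eq (interior_singleton 0))

theorem V1_lt_of_mem_interior_Rset {α : ℝ} (hα : 0 < α) {ξ : Fin n → ℝ}
    (hξ : ξ ∈ interior (Rset n A b T α)) : V1 n A b T ξ < α := by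
  have hnhds : ∀ᶠ t : ℝ in 𝓝 1, t • ξ ∈ Rset n A b T α :=
    (continuous_id.smul continuous_const).tendsto' 1 ξ (one_smul ℝ ξ)
      |>.eventually (mem_interior_iff_mem_nhds.1 hξ)
  obtain ⟨t, htξ, ht1⟩ := (hnhds.filter_mono nhdsWithin_le_nhds |>.and
    (self_mem_nhdsWithin : Ioi (1 : ℝ) ∈ 𝓝[>] 1)).exists
  have ht0 : 0 < t := zero_lt_one.trans ht1
  have ht_inv : |t⁻¹| < 1 := by
    rw [abs_inv, abs_of_pos ht0]
    exact inv_lt_one_of_one_lt₀ ht1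
  have hmem := smul_mem_Rset A b htξ ht_inv.le
  rw [inv_smul_smul₀ ht0.ne'] at hmem
  calc V1 n A b T ξ ≤ |t⁻¹| * α := V1_le_of_mem_Rset A b hmem
    _ < α := mul_lt_of_lt_one_left hα ht_inv

end Controls

section Perturbation

variable {T : ℝ} {w g : ℝ → ℝ} {E : Set ℝ}

theorem IsControl.volume_abs_le_ne_zero (hw : IsControl T w) (hT : 0 ≤ T) {c : ℝ}
    (h : L1norm T w < c * T) : volume {t ∈ Icc 0 T | |w t| ≤ c} ≠ 0 := by
  intro h0
  have hae : ∀ᵐ t ∂volume.restrict (Icc 0 T), c ≤ |w t| := by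
    rw [ae_restrict_iff' measurableSet_Icc]
    filter_upwards [measure_eq_zero_iff_ae_notMem.1 h0] with t ht htT
    exact (not_le.1 fun hle => ht ⟨htT, hle⟩).le
  have hle := integral_mono_ae (integrable_const c) hw.integrableOn.abs hae
  rw [setIntegral_const, Real.volume_real_Icc_of_le hT, sub_zero, smul_eq_mul] at hle
  exact (h.trans_le (by rw [mul_comm]; exact hle)).false

theorem IsControl.add_indicator (hw : IsControl T w) (hE : MeasurableSet E) (hg : Measurable g)
    {c : ℝ} (hwE : ∀ t ∈ E, |w t| ≤ c) (hgE : ∀ t ∈ E, |g t| ≤ 1 - c) :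
    IsControl T (w + E.indicator g) := by
  refine ⟨hw.1.add (hg.indicator hE), ?_⟩
  filter_upwards [hw.2] with t ht
  by_cases htE : t ∈ E
  · simpa [htE] using (abs_add_le _ _).trans (add_le_add (hwE t htE) (hgE t htE))
  · simpa [htE] using ht

theorem L1norm_add_indicator_le (hw : IsControl T w) (hT : 0 ≤ T) {δ : ℝ}
    (hg : ∀ t ∈ Icc 0 T, |g t| ≤ δ) : L1norm T (w + E.indicator g) ≤ L1norm T w + δ * T := by
  have hpt : ∀ t ∈ Icc 0 T, |(w + E.indicator g) t| ≤ |w t| + δ := fun t ht =>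
    (abs_add_le _ _).trans (add_le_add le_rfl ((norm_indicator_le_norm_self g t).trans (hg t ht)))
  calc L1norm T (w + E.indicator g) ≤ ∫ t in Icc 0 T, (|w t| + δ) :=
        integral_mono_of_nonneg (Eventually.of_forall fun _ => abs_nonneg _)
          (hw.integrableOn.abs.add (integrable_const δ))
          (ae_restrict_of_forall_mem measurableSet_Icc hpt)
    _ = L1norm T w + δ * T := by
        rw [integral_add hw.integrableOn.abs (integrable_const δ), setIntegral_const,
          Real.volume_real_Icc_of_le hT, sub_zero, smul_eq_mul, mul_comm, L1norm]

theorem steer_add_indicator (hw : IsControl T w) (hE : MeasurableSet E) (hET : E ⊆ Icc 0 T)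
    (hg : Continuous g) :
    steer n A b T (w + E.indicator g) = steer n A b T w + ∫ s in E, g s • steerKernel A b s := by
  have hgk : IntegrableOn (fun s => g s • steerKernel A b s) (Icc 0 T) :=
    (hg.smul (continuous_steerKernel A b)).continuousOn.integrableOn_compact isCompact_Icc
  simp only [steer_eq, Pi.add_apply, add_smul, ← indicator_smul_apply_left]
  rw [integral_add (hw.integrableOn_smul_steerKernel A b) (hgk.indicator hE),
    setIntegral_indicator hE, inter_eq_right.2 hET]

end Perturbation

section Interior

variable {T : ℝ} {E : Set ℝ}

theorem integrable_dotProduct_smul_steerKernel (hET : E ⊆ Icc 0 T) (c : Fin n → ℝ) :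
    Integrable (fun s => (c ⬝ᵥ steerKernel A b s) • steerKernel A b s) (volume.restrict E) :=
  (((continuous_const.dotProduct (continuous_steerKernel A b)).smul
    (continuous_steerKernel A b)).continuousOn.integrableOn_compact isCompact_Icc).mono_set hET

theorem Controllable.gramian_injective (hctrb : Controllable n A b) (hET : E ⊆ Icc 0 T)
    (hE : volume E ≠ 0) :
    Function.Injective (gramian (volume.restrict E) (steerKernel A b)
      (integrable_dotProduct_smul_steerKernel A b hET)) := by
  refine _root_.gramian_injective _ fun c hc h => hE ?_
  have hfalse : ∀ᵐ s ∂volume.restrict E, False := by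
    filter_upwards [ae_restrict_of_ae (hctrb.ae_dotProduct_steerKernel_ne_zero A b hc), h]
      with s hne heq using hne heq
  simpa using hfalse

theorem Controllable.steer_mem_interior_Rset (hctrb : Controllable n A b) {α : ℝ} (hαT : α ≤ T)
    {w : ℝ → ℝ} (hw : IsControl T w) (hwα : L1norm T w < α) :
    steer n A b T w ∈ interior (Rset n A b T α) := by
  have hT : 0 < T := (L1norm_nonneg w).trans_lt (hwα.trans_le hαT)
  obtain ⟨c₀, hwc₀, hc₀⟩ := exists_between ((div_lt_one hT).2 (hwα.trans_le hαT))
  set E := {t ∈ Icc 0 T | |w t| ≤ c₀}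
  have hE : MeasurableSet E := measurableSet_Icc.inter (measurableSet_le hw.1.abs measurable_const)
  have hET : E ⊆ Icc 0 T := sep_subset _ _
  have hEvol : volume E ≠ 0 := hw.volume_abs_le_ne_zero hT.le ((div_lt_iff₀ hT).1 hwc₀)
  let G :=
    (LinearEquiv.ofInjectiveEndo _ (hctrb.gramian_injective A b hET hEvol)).toContinuousLinearEquiv
  set v := fun c : Fin n → ℝ => w + E.indicator fun s => c ⬝ᵥ steerKernel A b s
  have hcont : ∀ c : Fin n → ℝ, Continuous fun s => c ⬝ᵥ steerKernel A b s := fun c =>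
    continuous_const.dotProduct (continuous_steerKernel A b)
  have hsteer : ∀ c, steer n A b T (v c) = steer n A b T w + G c := fun c =>
    steer_add_indicator A b hw hE hET (hcont c)
  have hgood : ∀ᶠ c in 𝓝 0, IsControl T (v c) ∧ L1norm T (v c) ≤ α := by
    filter_upwards [eventually_forall_abs_dotProduct_lt isCompact_Icc (continuous_steerKernel A b)
        (sub_pos.2 hc₀),
      eventually_forall_abs_dotProduct_lt isCompact_Icc (continuous_steerKernel A b)
        (div_pos (sub_pos.2 hwα) hT)] with c h₁ h₂
    refine ⟨hw.add_indicator hE (hcont c).measurable (fun t ht => ht.2)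
      fun t ht => (h₁ t (hET ht)).le, ?_⟩
    calc L1norm T (v c) ≤ L1norm T w + (α - L1norm T w) / T * T :=
          L1norm_add_indicator_le hw hT.le fun t ht => (h₂ t ht).le
      _ = α := by rw [div_mul_cancel₀ _ hT.ne']; ring
  have hlim : Tendsto (fun x => G.symm (x - steer n A b T w)) (𝓝 (steer n A b T w)) (𝓝 0) := by
    simpa [Function.comp_def] using
      (G.symm.continuous.comp (continuous_sub_right (steer n A b T w))).tendsto (steer n A b T w)
  rw [mem_interior_iff_mem_nhds]
  filter_upwards [hlim.eventually hgood] with x ⟨hctl, hL1⟩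
  exact ⟨_, hctl, hL1, by rw [hsteer, ContinuousLinearEquiv.apply_symm_apply, add_sub_cancel]⟩

end Interior

theorem interior_Rset_eq_strict_sublevel_general (T : ℝ) (n : ℕ) (hn : 1 ≤ n)
    (A : Matrix (Fin n) (Fin n) ℝ) (b : Fin n → ℝ)
    (hctrb : Controllable n A b) :
    ∀ α ∈ Set.Icc (0:ℝ) T,
      interior (Rset n A b T α) = {ξ ∈ ReachSet n A b T | V1 n A b T ξ < α} := by
  rintro α ⟨hα0, hαT⟩
  ext ξ
  constructor
  · intro hξ
    rcases hα0.eq_or_lt with rfl | hα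
    · rw [interior_Rset_zero A b hn] at hξ
      exact hξ.elim
    · exact ⟨Rset_subset_ReachSet A b α (interior_subset hξ),
        V1_lt_of_mem_interior_Rset A b hα hξ⟩
  · rintro ⟨hreach, hV⟩
    obtain ⟨w, hw, rfl, hwα⟩ := exists_control_of_V1_lt A b hreach hV
    exact hctrb.steer_mem_interior_Rset A b hαT hw hwα

/-- Lemma 5.8, item 2: under controllability and invertibility of `A`,
`int R_α = {ξ ∈ R(T) : V₁(ξ) < α}` for every `α ∈ [0,T]`. -/
theorem interior_Rset_eq_strict_sublevel (T : ℝ) (hT : 0 < T) (n : ℕ) (hn : 1 ≤ n)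
    (A : Matrix (Fin n) (Fin n) ℝ) (b : Fin n → ℝ)
    (hctrb : Controllable n A b) (hA : IsUnit A) :
    ∀ α ∈ Set.Icc (0:ℝ) T,
      interior (Rset n A b T α) = {ξ ∈ ReachSet n A b T | V1 n A b T ξ < α} :=
  interior_Rset_eq_strict_sublevel_general T n hn A b hctrb
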